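/- arXiv:1706.08567 — 4 statements merged into one kernel-verified Lean document; each statement's English description precedes it below -/
import Mathlib

section
/- Let S ≥ 1, c > 0, and let ω̂ = (ω̂_1,...,ω̂_S) be a probability vector. If ω = (ω_1,...,ω_S) follows the Dirichlet distribution with parameter α̂_s = 1 + c ω̂_s, s = 1,...,S, then for any nonnegative integers n_1,...,n_S with n_1 + ··· + n_S = n, E(ω_1^{n_1} ··· ω_S^{n_S}) ≥ [Γ(c + S) c^n / Γ(c + S + n)] · ω̂_1^{n_1} ··· ω̂_S^{n_S}. -/
open MeasureTheory Set

/-- The simplex `Δ(S)` of probability vectors in `ℝ^S`. -/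
def simplexSet (S : ℕ) : Set (Fin S → ℝ) :=
  {ω | (∀ s, 0 ≤ ω s) ∧ ∑ s, ω s = 1}

/-- Lebesgue measure on the simplex `Δ(S)` (via the first `S-1` coordinates). -/
noncomputable def simplexMeasure : (S : ℕ) → Measure (Fin S → ℝ)
  | 0 => 0
  | m + 1 =>
      Measure.map (fun y : Fin m → ℝ => Fin.snoc y (1 - ∑ i, y i))
        (volume.restrict {y : Fin m → ℝ | (∀ i, 0 ≤ y i) ∧ ∑ i, y i ≤ 1})

/-- The Dirichlet distribution on `Δ(S)` with parameter `α`, defined via its density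
`Γ(Σ α_s)/Π Γ(α_s) · Π ω_s^{α_s - 1}` with respect to Lebesgue measure on the simplex. -/
noncomputable def dirichletMeasure (S : ℕ) (α : Fin S → ℝ) : Measure (Fin S → ℝ) :=
  (simplexMeasure S).withDensity fun ω =>
    ENNReal.ofReal ((Real.Gamma (∑ s, α s) / ∏ s, Real.Gamma (α s)) * ∏ s, ω s ^ (α s - 1))

/-!
For `α_s > 0` the moments of the Dirichlet distribution are ratios of multivariate Beta functions
`B(α) = ∏ Γ(α_s) / Γ(∑ α_s)`: `E ∏ ω_s^{k_s} = B(α + k) / B(α)`. The normalisation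
`∫_Δ ∏ ω_s^{α_s - 1} = B(α)` is proved by induction on the dimension: integrating out the last free
coordinate is a one-dimensional Beta integral, which merges the last two parameters into their sum.
For `α_s = 1 + c ω̂_s` we have `∑ α_s = c + S`, so the moment is
`Γ(c + S) / Γ(c + S + n) · ∏ Γ(α_s + k_s) / Γ(α_s)`, and each factor
`Γ(a + k) / Γ(a) = a (a + 1) ⋯ (a + k - 1)` is at least `a^k ≥ (c ω̂_s)^k`.
-/

open Real ProbabilityTheory
open scoped ENNReal

def cornerSimplex (m : ℕ) : Set (Fin m → ℝ) := {y | (∀ i, 0 ≤ y i) ∧ ∑ i, y i ≤ 1}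

def toSimplex {m : ℕ} (y : Fin m → ℝ) : Fin (m + 1) → ℝ := Fin.snoc y (1 - ∑ i, y i)

noncomputable def multiBeta {n : ℕ} (α : Fin n → ℝ) : ℝ := (∏ i, Gamma (α i)) / Gamma (∑ i, α i)

lemma simplexMeasure_succ (m : ℕ) :
    simplexMeasure (m + 1) = (volume.restrict (cornerSimplex m)).map toSimplex := rfl

lemma measurableSet_cornerSimplex (m : ℕ) : MeasurableSet (cornerSimplex m) := by
  simp only [cornerSimplex, ofPred_and, ofPred_forall]
  exact (MeasurableSet.iInter fun i =>
    measurableSet_le measurable_const (measurable_pi_apply i)).inter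
      (measurableSet_le (by fun_prop) measurable_const)

lemma Measurable.finSnoc {X α : Type*} [MeasurableSpace X] [MeasurableSpace α] {m : ℕ}
    {f : X → Fin m → α} {g : X → α} (hf : Measurable f) (hg : Measurable g) :
    Measurable fun x => (Fin.snoc (f x) (g x) : Fin (m + 1) → α) := by
  refine measurable_pi_iff.2 fun i => ?_
  induction i using Fin.lastCases with
  | last => simpa only [Fin.snoc_last] using hg
  | cast j => simp only [Fin.snoc_castSucc]; fun_prop

@[fun_prop]
lemma measurable_toSimplex (m : ℕ) : Measurable (toSimplex (m := m)) :=
  measurable_id.finSnoc (by fun_prop)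

lemma toSimplex_nonneg {m : ℕ} {y : Fin m → ℝ} (hy : y ∈ cornerSimplex m) (i : Fin (m + 1)) :
    0 ≤ toSimplex y i := by
  induction i using Fin.lastCases with
  | last => simpa [toSimplex] using hy.2
  | cast j => simpa [toSimplex] using hy.1 j

lemma toSimplex_snoc {m : ℕ} (z : Fin m → ℝ) (x : ℝ) :
    toSimplex (Fin.snoc z x : Fin (m + 1) → ℝ) = Fin.snoc (Fin.snoc z x) (1 - ∑ i, z i - x) := by
  rw [toSimplex, Fin.sum_snoc, sub_add_eq_sub_sub]

lemma snoc_mem_cornerSimplex_iff {m : ℕ} {z : Fin m → ℝ} {x : ℝ} :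
    (Fin.snoc z x : Fin (m + 1) → ℝ) ∈ cornerSimplex (m + 1) ↔
      z ∈ cornerSimplex m ∧ x ∈ Icc 0 (1 - ∑ i, z i) := by
  simp only [cornerSimplex, mem_ofPred_eq, Fin.forall_fin_succ', Fin.snoc_castSucc, Fin.snoc_last,
    Fin.sum_snoc, mem_Icc]
  constructor
  · rintro ⟨⟨hz, hx⟩, hsum⟩
    exact ⟨⟨hz, by linarith⟩, hx, by linarith⟩
  · rintro ⟨⟨hz, -⟩, hx, hsum⟩
    exact ⟨⟨hz, hx⟩, by linarith⟩

lemma lintegral_eq_lintegral_finSnoc {E : Type*} [MeasureSpace E] [SigmaFinite (volume : Measure E)]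
    {m : ℕ} {g : (Fin (m + 1) → E) → ℝ≥0∞} (hg : Measurable g) :
    ∫⁻ y, g y = ∫⁻ z, ∫⁻ x, g (Fin.snoc z x) := by
  rw [← (volume_preserving_piFinSuccAbove (fun _ => E) (Fin.last m)).symm.lintegral_comp hg,
    Measure.volume_eq_prod, lintegral_prod_symm _ (by fun_prop)]
  simp [MeasurableEquiv.piFinSuccAbove, Fin.insertNthEquiv, Fin.insertNth_last']

lemma setLIntegral_cornerSimplex_succ {m : ℕ} {f : (Fin (m + 1) → ℝ) → ℝ≥0∞} (hf : Measurable f) :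
    ∫⁻ y in cornerSimplex (m + 1), f y =
      ∫⁻ z in cornerSimplex m, ∫⁻ x in Icc 0 (1 - ∑ i, z i), f (Fin.snoc z x) := by
  rw [← lintegral_indicator (measurableSet_cornerSimplex _),
    lintegral_eq_lintegral_finSnoc (hf.indicator (measurableSet_cornerSimplex _)),
    ← lintegral_indicator (measurableSet_cornerSimplex _)]
  congr 1 with z
  by_cases hz : z ∈ cornerSimplex m
  · rw [indicator_of_mem hz, ← lintegral_indicator measurableSet_Icc]
    congr 1 with x
    simp only [indicator, snoc_mem_cornerSimplex_iff, hz, true_and]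
  · simp [indicator, snoc_mem_cornerSimplex_iff, hz]

lemma ae_sum_ne_one (m : ℕ) : ∀ᵐ z : Fin m → ℝ, ∑ i, z i ≠ 1 := by
  cases m with
  | zero => simp
  | succ m =>
    have hmeas : MeasurableSet {z : Fin (m + 1) → ℝ | ∑ i, z i = 1} :=
      measurableSet_eq_fun (by fun_prop) measurable_const
    have hsection (z : Fin m → ℝ) :
        (fun x => {y | ∑ i, y i = 1}.indicator 1 (Fin.snoc z x : Fin (m + 1) → ℝ)) =
          ({1 - ∑ i, z i} : Set ℝ).indicator (1 : ℝ → ℝ≥0∞) := by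
      ext x
      simp only [indicator, mem_ofPred_eq, Fin.sum_snoc, mem_singleton_iff, eq_sub_iff_add_eq',
        Pi.one_apply]
    simp only [ae_iff, not_not]
    rw [← lintegral_indicator_one hmeas,
      lintegral_eq_lintegral_finSnoc (measurable_one.indicator hmeas)]
    simp only [hsection, lintegral_indicator_one (measurableSet_singleton _), Real.volume_singleton,
      lintegral_zero]

lemma setLIntegral_Ioo_rpow_mul_one_sub_rpow {u v : ℝ} (hu : 0 < u) (hv : 0 < v) :
    ∫⁻ t in Ioo 0 1, ENNReal.ofReal (t ^ (u - 1) * (1 - t) ^ (v - 1)) =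
      ENNReal.ofReal (beta u v) := by
  have h := lintegral_betaPDF_eq_one hu hv
  have hB := beta_pos hu hv
  simp_rw [lintegral_betaPDF, mul_assoc, ENNReal.ofReal_mul (one_div_pos.2 hB).le] at h
  rw [lintegral_const_mul' _ _ ENNReal.ofReal_ne_top, one_div, ENNReal.ofReal_inv_of_pos hB] at h
  rw [← ENNReal.mul_inv_cancel_left (ENNReal.ofReal_pos.2 hB).ne' ENNReal.ofReal_ne_top
    (b := ∫⁻ t in Ioo 0 1, _), h, mul_one]

lemma setLIntegral_Ioo_zero_eq_mul_comp_mul {r : ℝ} (hr : 0 < r) (g : ℝ → ℝ≥0∞) :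
    ∫⁻ x in Ioo 0 r, g x = ENNReal.ofReal r * ∫⁻ t in Ioo 0 1, g (r * t) := by
  have he : MeasurableEmbedding (r * ·) := (Homeomorph.mulLeft₀ r hr.ne').measurableEmbedding
  conv_lhs => rw [← Real.smul_map_volume_mul_left hr.ne']
  rw [Measure.restrict_smul, lintegral_smul_measure, abs_of_pos hr, he.restrict_map,
    he.lintegral_map, preimage_const_mul_Ioo₀ _ _ hr, zero_div, div_self hr.ne', smul_eq_mul]

lemma setLIntegral_Icc_rpow_mul_sub_rpow {u v r : ℝ} (hu : 0 < u) (hv : 0 < v) (hr : 0 < r) :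
    ∫⁻ x in Icc 0 r, ENNReal.ofReal (x ^ (u - 1) * (r - x) ^ (v - 1)) =
      ENNReal.ofReal (r ^ (u + v - 1) * beta u v) := by
  have hscale : ∀ t ∈ Ioo (0 : ℝ) 1,
      ENNReal.ofReal ((r * t) ^ (u - 1) * (r - r * t) ^ (v - 1)) =
        ENNReal.ofReal (r ^ (u + v - 2)) * ENNReal.ofReal (t ^ (u - 1) * (1 - t) ^ (v - 1)) := by
    rintro t ⟨ht0, ht1⟩
    rw [← ENNReal.ofReal_mul (by positivity), show r - r * t = r * (1 - t) by ring,
      mul_rpow hr.le ht0.le, mul_rpow hr.le (by linarith),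
      show u + v - 2 = (u - 1) + (v - 1) by ring, rpow_add hr]
    ring_nf
  rw [Measure.restrict_congr_set Ioo_ae_eq_Icc.symm, setLIntegral_Ioo_zero_eq_mul_comp_mul hr,
    setLIntegral_congr_fun measurableSet_Ioo hscale, lintegral_const_mul' _ _ ENNReal.ofReal_ne_top,
    setLIntegral_Ioo_rpow_mul_one_sub_rpow hu hv, ← mul_assoc, ← ENNReal.ofReal_mul hr.le,
    ← ENNReal.ofReal_mul (by positivity)]
  congr 1
  rw [show u + v - 1 = 1 + (u + v - 2) by ring, rpow_add hr, rpow_one]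

lemma multiBeta_snoc_snoc {m : ℕ} (a : Fin m → ℝ) {u v : ℝ} (hu : 0 < u) (hv : 0 < v) :
    multiBeta (Fin.snoc (Fin.snoc a u) v : Fin (m + 2) → ℝ) =
      multiBeta (Fin.snoc a (u + v) : Fin (m + 1) → ℝ) * beta u v := by
  have hΓ : Gamma (u + v) ≠ 0 := (Gamma_pos_of_pos (by linarith)).ne'
  simp only [multiBeta, beta, Fin.prod_univ_castSucc, Fin.sum_univ_castSucc, Fin.snoc_castSucc,
    Fin.snoc_last]
  field_simp
  ring_nf

lemma setLIntegral_cornerSimplex_succ_prod_rpow {m : ℕ} (a : Fin m → ℝ) {u v : ℝ}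
    (hu : 0 < u) (hv : 0 < v) :
    ∫⁻ y in cornerSimplex (m + 1), ENNReal.ofReal
        (∏ i, toSimplex y i ^ ((Fin.snoc (Fin.snoc a u) v : Fin (m + 2) → ℝ) i - 1)) =
      ENNReal.ofReal (beta u v) * ∫⁻ z in cornerSimplex m, ENNReal.ofReal
        (∏ i, toSimplex z i ^ ((Fin.snoc a (u + v) : Fin (m + 1) → ℝ) i - 1)) := by
  rw [setLIntegral_cornerSimplex_succ (by fun_prop),
    ← lintegral_const_mul' _ _ ENNReal.ofReal_ne_top]
  refine setLIntegral_congr_fun_ae (measurableSet_cornerSimplex m) ?_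
  -- the Beta integral needs `0 < 1 - ∑ z`, which fails only on a null hyperplane
  filter_upwards [ae_sum_ne_one m] with z hz1 hz
  have hr : 0 < 1 - ∑ i, z i := sub_pos.2 (lt_of_le_of_ne hz.2 hz1)
  have hP : 0 ≤ ∏ j, z j ^ (a j - 1) := Finset.prod_nonneg fun j _ => rpow_nonneg (hz.1 j) _
  have hsplit (x : ℝ) : ∏ i, toSimplex (Fin.snoc z x : Fin (m + 1) → ℝ) i ^
        ((Fin.snoc (Fin.snoc a u) v : Fin (m + 2) → ℝ) i - 1) =
      (∏ j, z j ^ (a j - 1)) * (x ^ (u - 1) * (1 - ∑ i, z i - x) ^ (v - 1)) := by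
    simp only [toSimplex_snoc, Fin.prod_univ_castSucc, Fin.snoc_castSucc, Fin.snoc_last]
    ring
  have hmerge : ∏ i, toSimplex z i ^ ((Fin.snoc a (u + v) : Fin (m + 1) → ℝ) i - 1) =
      (∏ j, z j ^ (a j - 1)) * (1 - ∑ i, z i) ^ (u + v - 1) := by
    simp only [toSimplex, Fin.prod_univ_castSucc, Fin.snoc_castSucc, Fin.snoc_last]
  simp_rw [hsplit, ENNReal.ofReal_mul hP]
  rw [lintegral_const_mul' _ _ ENNReal.ofReal_ne_top, setLIntegral_Icc_rpow_mul_sub_rpow hu hv hr,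
    hmerge, ← ENNReal.ofReal_mul hP, ← ENNReal.ofReal_mul (beta_pos hu hv).le]
  congr 1
  ring

theorem setLIntegral_cornerSimplex_prod_rpow {m : ℕ} (α : Fin (m + 1) → ℝ) (hα : ∀ i, 0 < α i) :
    ∫⁻ y in cornerSimplex m, ENNReal.ofReal (∏ i, toSimplex y i ^ (α i - 1)) =
      ENNReal.ofReal (multiBeta α) := by
  induction m with
  | zero =>
    simp [cornerSimplex, toSimplex, Fin.snoc, multiBeta, (Gamma_pos_of_pos (hα 0)).ne', volume_pi]
  | succ m ih =>
    obtain ⟨a, u, v, rfl⟩ : ∃ a u v, α = Fin.snoc (Fin.snoc a u) v :=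
      ⟨Fin.init (Fin.init α), Fin.init α (Fin.last m), α (Fin.last _),
        by simp only [Fin.snoc_init_self]⟩
    have hu : 0 < u := by simpa using hα (Fin.last m).castSucc
    have hv : 0 < v := by simpa using hα (Fin.last _)
    have hmerged : ∀ i, 0 < (Fin.snoc a (u + v) : Fin (m + 1) → ℝ) i :=
      Fin.lastCases (by simpa using add_pos hu hv) fun j => by simpa using hα j.castSucc.castSucc
    rw [setLIntegral_cornerSimplex_succ_prod_rpow a hu hv, ih _ hmerged,
      multiBeta_snoc_snoc a hu hv, ENNReal.ofReal_mul' (beta_pos hu hv).le, mul_comm]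

lemma rpow_sub_one_mul_pow {x a : ℝ} (hx : 0 ≤ x) (ha : 0 < a) (k : ℕ) :
    x ^ (a - 1) * x ^ k = x ^ (a + k - 1) := by
  rcases k.eq_zero_or_pos with rfl | hk
  · simp
  · rw [← rpow_natCast, ← rpow_add' hx (by linarith [show (1 : ℝ) ≤ k by exact_mod_cast hk])]
    ring_nf

theorem lintegral_prod_pow_dirichletMeasure {m : ℕ} (α : Fin (m + 1) → ℝ) (hα : ∀ i, 0 < α i)
    (k : Fin (m + 1) → ℕ) :
    ∫⁻ ω, ENNReal.ofReal (∏ i, ω i ^ k i) ∂dirichletMeasure (m + 1) α =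
      ENNReal.ofReal (multiBeta (fun i => α i + k i) / multiBeta α) := by
  set C := Gamma (∑ i, α i) / ∏ i, Gamma (α i)
  have hC : 0 ≤ C :=
    div_nonneg (Gamma_nonneg_of_nonneg (Finset.sum_nonneg fun i _ => (hα i).le))
      (Finset.prod_nonneg fun i _ => (Gamma_pos_of_pos (hα i)).le)
  have hmoment : ∀ y ∈ cornerSimplex m,
      ENNReal.ofReal (C * ∏ i, toSimplex y i ^ (α i - 1)) *
          ENNReal.ofReal (∏ i, toSimplex y i ^ k i) =
        ENNReal.ofReal C * ENNReal.ofReal (∏ i, toSimplex y i ^ ((α i + k i) - 1)) := by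
    intro y hy
    rw [ENNReal.ofReal_mul hC, mul_assoc, ← ENNReal.ofReal_mul
      (Finset.prod_nonneg fun i _ => rpow_nonneg (toSimplex_nonneg hy i) _),
      ← Finset.prod_mul_distrib]
    simp_rw [rpow_sub_one_mul_pow (toSimplex_nonneg hy _) (hα _)]
  rw [dirichletMeasure, lintegral_withDensity_eq_lintegral_mul _ (by fun_prop) (by fun_prop),
    simplexMeasure_succ, lintegral_map (by fun_prop) (measurable_toSimplex m)]
  simp only [Pi.mul_apply]
  rw [setLIntegral_congr_fun (measurableSet_cornerSimplex m) hmoment,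
    lintegral_const_mul' _ _ ENNReal.ofReal_ne_top,
    setLIntegral_cornerSimplex_prod_rpow _ fun i =>
      add_pos_of_pos_of_nonneg (hα i) (k i).cast_nonneg,
    ← ENNReal.ofReal_mul hC, div_eq_inv_mul, multiBeta, multiBeta, inv_div]

lemma Gamma_mul_pow_le_Gamma_add_nat {a : ℝ} (ha : 0 < a) (k : ℕ) :
    Gamma a * a ^ k ≤ Gamma (a + k) := by
  induction k with
  | zero => simp
  | succ k ih =>
    calc Gamma a * a ^ (k + 1) = Gamma a * a ^ k * a := by ring
      _ ≤ Gamma (a + k) * (a + k) := by gcongr; linarith [(Nat.cast_nonneg k : (0 : ℝ) ≤ k)]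
      _ = Gamma (a + (k + 1 : ℕ)) := by
        rw [Nat.cast_succ, ← add_assoc, Gamma_add_one (by positivity), mul_comm]

lemma le_multiBeta_add_nat_div_multiBeta {n : ℕ} {α : Fin n → ℝ} (hα : ∀ i, 0 < α i)
    (k : Fin n → ℕ) :
    Gamma (∑ i, α i) / Gamma (∑ i, α i + ∑ i, (k i : ℝ)) * ∏ i, α i ^ k i ≤
      multiBeta (fun i => α i + k i) / multiBeta α := by
  have hratio : multiBeta (fun i => α i + k i) / multiBeta α =
      Gamma (∑ i, α i) / Gamma (∑ i, α i + ∑ i, (k i : ℝ)) *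
        ∏ i, Gamma (α i + k i) / Gamma (α i) := by
    simp only [multiBeta, Finset.sum_add_distrib, div_eq_mul_inv, mul_inv, inv_inv,
      Finset.prod_mul_distrib, Finset.prod_inv_distrib]
    ring
  have hsum : 0 ≤ ∑ i, α i := Finset.sum_nonneg fun i _ => (hα i).le
  rw [hratio]
  refine mul_le_mul_of_nonneg_left
    (Finset.prod_le_prod (fun i _ => (pow_pos (hα i) _).le) fun i _ => ?_)
    (div_nonneg (Gamma_nonneg_of_nonneg hsum) (Gamma_nonneg_of_nonneg (by positivity)))
  rw [le_div_iff₀ (Gamma_pos_of_pos (hα i)), mul_comm]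
  exact Gamma_mul_pow_le_Gamma_add_nat (hα i) (k i)

theorem dirichlet_moment_lower_bound_general
    (S : ℕ) (c : ℝ) (hc : 0 < c)
    (ωhat : Fin S → ℝ) (hωhat : ωhat ∈ simplexSet S)
    (k : Fin S → ℕ) (n : ℕ) (hn : n = ∑ s, k s) :
    ENNReal.ofReal
        ((Real.Gamma (c + S) * c ^ n / Real.Gamma (c + S + n)) * ∏ s, ωhat s ^ k s) ≤
      ∫⁻ ω, ENNReal.ofReal (∏ s, ω s ^ k s)
        ∂(dirichletMeasure S fun s => 1 + c * ωhat s) := by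
  obtain ⟨m, rfl⟩ : ∃ m, S = m + 1 := by
    cases S with
    | zero => simp [simplexSet] at hωhat
    | succ m => exact ⟨m, rfl⟩
  set α : Fin (m + 1) → ℝ := fun s => 1 + c * ωhat s
  have hcω (s) : 0 ≤ c * ωhat s := mul_nonneg hc.le (hωhat.1 s)
  have hα (s) : 0 < α s := by linarith [hcω s]
  have hsum : ∑ s, α s = c + (m + 1 : ℕ) := by
    simp [α, Finset.sum_add_distrib, ← Finset.mul_sum, hωhat.2, add_comm]
  rw [lintegral_prod_pow_dirichletMeasure α hα k]
  refine ENNReal.ofReal_le_ofReal (le_trans ?_ (le_multiBeta_add_nat_div_multiBeta hα k))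
  rw [hsum, hn, Nat.cast_sum, mul_div_right_comm, mul_assoc, ← Finset.prod_pow_eq_pow_sum,
    ← Finset.prod_mul_distrib]
  simp_rw [← mul_pow]
  exact mul_le_mul_of_nonneg_left (Finset.prod_le_prod (fun s _ => pow_nonneg (hcω s) _)
    fun s _ => pow_le_pow_left₀ (hcω s) (le_add_of_nonneg_left zero_le_one) _) (by positivity)

/-- **Dirichlet moment lower bound.**  If `ω ~ Dir_S(1 + c ω̂)` with `ω̂` a probability
vector, then for nonnegative integers `n_1, …, n_S` with `n = Σ_s n_s`,
`E(ω₁^{n₁} ⋯ ω_S^{n_S}) ≥ [Γ(c + S) cⁿ / Γ(c + S + n)] ω̂₁^{n₁} ⋯ ω̂_S^{n_S}`. -/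
theorem dirichlet_moment_lower_bound
    (S : ℕ) (hS : 1 ≤ S) (c : ℝ) (hc : 0 < c)
    (ωhat : Fin S → ℝ) (hωhat : ωhat ∈ simplexSet S)
    (k : Fin S → ℕ) (n : ℕ) (hn : n = ∑ s, k s) :
    ENNReal.ofReal
        ((Real.Gamma (c + S) * c ^ n / Real.Gamma (c + S + n)) * ∏ s, ωhat s ^ k s) ≤
      ∫⁻ ω, ENNReal.ofReal (∏ s, ω s ^ k s)
        ∂(dirichletMeasure S fun s => 1 + c * ωhat s) :=
  dirichlet_moment_lower_bound_general S c hc ωhat hωhat k n hn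
end

section
/- Let ε_n = (log n)^{1/3} n^{-1/3}, and suppose S_n = ⌈a n ε_n^2 / log n⌉ for some a > 0 and c_n = b n ε_n^{-2} for some b > 0. Then there exists a constant K > 0 such that Γ(c_n + S_n) c_n^n / Γ(c_n + S_n + n) ≥ e^{-K n ε_n^2} for all sufficiently large n. -/
/-- The target rate `ε_n = (log n)^{1/3} n^{-1/3}`. -/
noncomputable def epsn (n : ℕ) : ℝ :=
  (Real.log n) ^ ((1 : ℝ) / 3) * (n : ℝ) ^ (-(1 : ℝ) / 3)

private lemma gamma_shift (x : ℝ) (hx : 0 < x) (n : ℕ) :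
    Real.Gamma (x + n) = Real.Gamma x * ∏ k ∈ Finset.range n, (x + k) := by
  induction n with
  | zero => simp
  | succ m ih =>
    have hxm : x + (m : ℝ) ≠ 0 := by positivity
    have h1 : x + ((m + 1 : ℕ) : ℝ) = (x + m) + 1 := by push_cast; ring
    calc Real.Gamma (x + ((m + 1 : ℕ) : ℝ)) = Real.Gamma ((x + m) + 1) := by rw [h1]
      _ = (x + m) * Real.Gamma (x + m) := Real.Gamma_add_one hxm
      _ = Real.Gamma x * ∏ k ∈ Finset.range (m + 1), (x + k) := by
          rw [ih, Finset.prod_range_succ]; ring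

/-- **Gamma ratio lower bound.**  With `ε_n = (log n)^{1/3} n^{-1/3}`,
`S_n = ⌈a n ε_n² / log n⌉` and `c_n = b n ε_n⁻²`, there is `K > 0` such that
`Γ(c_n + S_n) c_nⁿ / Γ(c_n + S_n + n) ≥ e^{-K n ε_n²}` for all large `n`. -/
theorem gamma_ratio_lower_bound
    (a b : ℝ) (ha : 0 < a) (hb : 0 < b)
    (S : ℕ → ℕ) (c : ℕ → ℝ)
    (hS : ∀ n : ℕ, 2 ≤ n → S n = ⌈a * (n * epsn n ^ (2 : ℕ)) / Real.log n⌉₊)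
    (hc : ∀ n : ℕ, 2 ≤ n → c n = b * n * ((epsn n) ^ (2 : ℕ))⁻¹) :
    ∃ K : ℝ, 0 < K ∧ ∃ N : ℕ, ∀ n : ℕ, N ≤ n →
      Real.exp (-K * (n * epsn n ^ (2 : ℕ))) ≤
        Real.Gamma (c n + S n) * c n ^ n / Real.Gamma (c n + S n + n) := by
  set A := max a 1 with hAdef
  have hA1 : (1 : ℝ) ≤ A := le_max_right a 1
  have haA : a ≤ A := le_max_left a 1
  refine ⟨2 / b, by positivity, max 3 ⌈A ^ 3⌉₊, fun n hn => ?_⟩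
  have hn3 : 3 ≤ n := le_trans (le_max_left _ _) hn
  have hn2 : 2 ≤ n := by omega
  have hx0 : (0 : ℝ) < n := by positivity
  have hx3 : (3 : ℝ) ≤ n := by exact_mod_cast hn3
  have hx1 : (1 : ℝ) ≤ n := by linarith
  -- log n ≥ 1
  have hL1 : 1 ≤ Real.log n := by
    rw [← Real.log_exp 1]
    apply Real.log_le_log (Real.exp_pos 1)
    have := Real.exp_one_lt_d9
    linarith
  have hL0 : 0 < Real.log n := by linarith
  set L := Real.log n with hLdef
  set x := (n : ℝ) with hxdef
  -- epsilon squared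
  have hE : epsn n ^ (2 : ℕ) = L ^ (2/3 : ℝ) * x ^ (-(2/3) : ℝ) := by
    unfold epsn
    rw [mul_pow, ← Real.rpow_natCast (L ^ ((1:ℝ)/3)) 2,
      ← Real.rpow_natCast (x ^ (-(1:ℝ)/3)) 2,
      ← Real.rpow_mul hL0.le, ← Real.rpow_mul hx0.le]
    norm_num
  have hEpos : 0 < epsn n ^ (2 : ℕ) := by rw [hE]; positivity
  -- n * ε² = L^{2/3} x^{1/3}
  have hxmul : x * x ^ (-(2/3) : ℝ) = x ^ (1/3 : ℝ) := by
    have h := Real.rpow_add hx0 1 (-(2/3))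
    rw [Real.rpow_one] at h
    rw [← h]; norm_num
  have hnE : x * epsn n ^ (2 : ℕ) = L ^ (2/3 : ℝ) * x ^ (1/3 : ℝ) := by
    rw [hE, ← hxmul]; ring
  -- A ≤ x^{1/3}
  have hA3x : A ^ 3 ≤ x := by
    have h1 : (⌈A ^ 3⌉₊ : ℝ) ≤ x := by
      exact_mod_cast Nat.cast_le.mpr (le_trans (le_max_right 3 _) hn)
    exact le_trans (Nat.le_ceil _) h1
  have hAx : A ≤ x ^ (1/3 : ℝ) := by
    have hA0 : (0 : ℝ) ≤ A := by linarith
    calc A = (A ^ 3) ^ (1/3 : ℝ) := by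
          rw [← Real.rpow_natCast A 3, ← Real.rpow_mul hA0]; norm_num
      _ ≤ x ^ (1/3 : ℝ) := Real.rpow_le_rpow (by positivity) hA3x (by norm_num)
  -- S n ≤ n
  have hSn : (S n : ℝ) ≤ x := by
    rw [hS n hn2]
    have hceil : (⌈a * (x * epsn n ^ (2:ℕ)) / L⌉₊ : ℝ) ≤ x := by
      have : a * (x * epsn n ^ (2:ℕ)) / L ≤ x := by
        rw [div_le_iff₀ hL0, hnE]
        have h1 : L ^ (2/3 : ℝ) ≤ L :=
          calc L ^ (2/3 : ℝ) ≤ L ^ (1 : ℝ) :=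
                Real.rpow_le_rpow_of_exponent_le hL1 (by norm_num)
            _ = L := Real.rpow_one L
        have h2 : a * x ^ (1/3 : ℝ) ≤ x ^ (2/3 : ℝ) := by
          have := mul_le_mul (le_trans haA hAx) (le_refl (x ^ (1/3 : ℝ)))
            (by positivity) (by positivity)
          calc a * x ^ (1/3 : ℝ) ≤ x ^ (1/3 : ℝ) * x ^ (1/3 : ℝ) := this
            _ = x ^ (2/3 : ℝ) := by
                rw [← Real.rpow_add hx0]; norm_num
        have h3 : x ^ (2/3 : ℝ) ≤ x :=
          calc x ^ (2/3 : ℝ) ≤ x ^ (1 : ℝ) :=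
                Real.rpow_le_rpow_of_exponent_le hx1 (by norm_num)
            _ = x := Real.rpow_one x
        calc a * (L ^ (2/3:ℝ) * x ^ (1/3:ℝ)) = (a * x ^ (1/3:ℝ)) * L ^ (2/3:ℝ) := by ring
          _ ≤ x ^ (2/3:ℝ) * L := by
              apply mul_le_mul h2 h1 (by positivity) (by positivity)
          _ ≤ x * L := by nlinarith [Real.rpow_nonneg hx0.le (2/3 : ℝ)]
      have h4 : ⌈a * (x * epsn n ^ (2:ℕ)) / L⌉₊ ≤ n := Nat.ceil_le.mpr this
      rw [hxdef]
      exact_mod_cast h4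
    exact hceil
  -- c n
  have hcn := hc n hn2
  have hcpos : 0 < c n := by rw [hcn]; positivity
  set y := c n + (S n : ℝ) with hydef
  have hy : 0 < y := by positivity
  -- Gamma expansion
  have hG := gamma_shift y hy n
  have hGy : 0 < Real.Gamma y := Real.Gamma_pos_of_pos hy
  have hprodpos : 0 < ∏ k ∈ Finset.range n, (y + (k : ℝ)) :=
    Finset.prod_pos fun k _ => by positivity
  -- ratio equals product of c/(y+k)
  have hratio : Real.Gamma (c n + S n) * c n ^ n / Real.Gamma (c n + S n + n)
      = ∏ k ∈ Finset.range n, (c n / (y + k)) := by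
    have : Real.Gamma (c n + (S n : ℝ) + n) = Real.Gamma y * ∏ k ∈ Finset.range n, (y + k) := hG
    rw [this, Finset.prod_div_distrib, Finset.prod_const, Finset.card_range]
    field_simp
    ring
  rw [hratio]
  -- lower bound each factor
  have hfac : ∀ k ∈ Finset.range n,
      Real.exp (-(((S n : ℝ) + k) / c n)) ≤ c n / (y + k) := by
    intro k _
    have ht0 : (0 : ℝ) ≤ (S n : ℝ) + k := by positivity
    set t := (S n : ℝ) + k with htdef
    have h1 : t / c n + 1 ≤ Real.exp (t / c n) := Real.add_one_le_exp _
    have hu : 0 < t / c n + 1 := by positivity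
    have h2 : c n / (y + (k : ℝ)) = (t / c n + 1)⁻¹ := by
      have hyk : y + (k : ℝ) = c n * (t / c n + 1) := by
        rw [hydef, htdef]; field_simp; ring
      rw [hyk]
      field_simp
    rw [h2, Real.exp_neg]
    exact inv_anti₀ hu h1
  have hprodge : ∏ k ∈ Finset.range n, Real.exp (-(((S n : ℝ) + k) / c n))
      ≤ ∏ k ∈ Finset.range n, (c n / (y + k)) :=
    Finset.prod_le_prod (fun k _ => (Real.exp_pos _).le) hfac
  refine le_trans ?_ hprodge
  rw [← Real.exp_sum]
  apply Real.exp_le_exp.mpr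
  -- sum bound
  have hsum : ∑ k ∈ Finset.range n, (((S n : ℝ) + k) / c n) ≤ 2 * x * epsn n ^ (2:ℕ) / b := by
    have hterm : ∀ k ∈ Finset.range n, ((S n : ℝ) + k) / c n ≤ 2 * x / c n := by
      intro k hk
      have hk' : (k : ℝ) ≤ x := by
        have := Finset.mem_range.mp hk
        exact_mod_cast Nat.cast_le.mpr this.le
      exact (div_le_div_iff_of_pos_right hcpos).mpr (by linarith)
    calc ∑ k ∈ Finset.range n, (((S n : ℝ) + k) / c n)
        ≤ ∑ k ∈ Finset.range n, (2 * x / c n) := Finset.sum_le_sum hterm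
      _ = x * (2 * x / c n) := by rw [Finset.sum_const, Finset.card_range]; simp [hxdef]
      _ = 2 * x * epsn n ^ (2:ℕ) / b := by
          rw [hcn]; field_simp; ring
  have hneg : ∑ k ∈ Finset.range n, (-(((S n : ℝ) + k) / c n))
      = -(∑ k ∈ Finset.range n, (((S n : ℝ) + k) / c n)) := by
    rw [Finset.sum_neg_distrib]
  rw [hneg]
  have : -(2 / b) * ((n : ℝ) * epsn n ^ (2:ℕ)) = -(2 * x * epsn n ^ (2:ℕ) / b) := by
    rw [hxdef]; ring
  rw [this]
  exact neg_le_neg hsum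
end

section
/- Let S ≥ 1, c > 0, and let ω̂ = (ω̂_1,...,ω̂_S) be a probability vector. Then the density of the Dirichlet distribution with parameter α̂_s = 1 + c ω̂_s, namely π(ω) = [Γ(c + S)/Π_{s=1}^S Γ(1 + c ω̂_s)] Π_{s=1}^S ω_s^{c ω̂_s}, is uniformly bounded over the simplex: π(ω) ≤ (c + S)^{c + S + 1/2} c^{-c} for all ω ∈ Δ(S). -/
open Set

/-!
Euler's integral gives both Gamma bounds: restricting it to `(t, ∞)`, where `x ^ t ≥ t ^ t`,
yields `t ^ t e ^ (-t) ≤ Γ(1 + t)`, and a Laplace-type estimate yields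
`Γ(x) ≤ x ^ x e ^ (1 - x)` for `x ≥ 1`. With `t = c ω̂ₛ`, the first bound and Gibbs' inequality
`∏ₛ ωₛ ^ ω̂ₛ ≤ ∏ₛ ω̂ₛ ^ ω̂ₛ` bound `∏ₛ ωₛ ^ (c ω̂ₛ) / ∏ₛ Γ(1 + c ω̂ₛ)` by `e ^ c c ^ (-c)`;
the second bounds `Γ(c + S) e ^ c` by `(c + S) ^ (c + S) e ^ (1 - S) ≤ (c + S) ^ (c + S + 1/2)`.
-/

open MeasureTheory

namespace Real

theorem rpow_le_exp_sub_one_mul {u a : ℝ} (hu : 0 ≤ u) (ha : 0 ≤ a) :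
    u ^ a ≤ exp ((u - 1) * a) := by
  rw [exp_mul]
  gcongr
  simpa using add_one_le_exp (u - 1)

theorem Gamma_le_rpow_mul_exp {x : ℝ} (hx : 1 ≤ x) : Gamma x ≤ x ^ x * exp (1 - x) := by
  have hx0 : 0 < x := by linarith
  -- Split `exp (-t) = exp (-t (x - 1) / x) * exp (-t / x)`: the first factor times `t ^ (x - 1)`
  -- is maximal at `t = x`, and the second integrates to `x`.
  have hpt : ∀ t ∈ Ioi (0 : ℝ),
      exp (-t) * t ^ (x - 1) ≤ x ^ (x - 1) * exp (1 - x) * exp (-x⁻¹ * t) := by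
    intro t (ht : 0 < t)
    have hsplit : t ^ (x - 1) = x ^ (x - 1) * (t / x) ^ (x - 1) := by
      rw [← mul_rpow hx0.le (by positivity), mul_div_cancel₀ _ hx0.ne']
    calc exp (-t) * t ^ (x - 1)
        ≤ exp (-t) * (x ^ (x - 1) * exp ((t / x - 1) * (x - 1))) := by
          rw [hsplit]
          gcongr
          exact rpow_le_exp_sub_one_mul (by positivity) (by linarith)
      _ = x ^ (x - 1) * exp (1 - x) * exp (-x⁻¹ * t) := by
          rw [mul_left_comm, mul_assoc, ← exp_add, ← exp_add]
          congr 2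
          field_simp
          ring
  have hexp : ∫ t in Ioi (0 : ℝ), exp (-x⁻¹ * t) = x := by
    rw [integral_exp_mul_Ioi (by simpa using hx0) 0]
    simp
  calc Gamma x = ∫ t in Ioi (0 : ℝ), exp (-t) * t ^ (x - 1) := Gamma_eq_integral hx0
    _ ≤ ∫ t in Ioi (0 : ℝ), x ^ (x - 1) * exp (1 - x) * exp (-x⁻¹ * t) :=
        setIntegral_mono_on (GammaIntegral_convergent hx0)
          ((exp_neg_integrableOn_Ioi 0 (by positivity)).const_mul _) measurableSet_Ioi hpt
    _ = x ^ x * exp (1 - x) := by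
        rw [integral_const_mul, hexp, mul_right_comm, ← rpow_add_one hx0.ne', sub_add_cancel]

theorem rpow_mul_exp_neg_le_Gamma_one_add {t : ℝ} (ht : 0 ≤ t) :
    t ^ t * exp (-t) ≤ Gamma (1 + t) := by
  have hpos : (0 : ℝ) < 1 + t := by linarith
  have hint := GammaIntegral_convergent hpos
  simp only [add_sub_cancel_left] at hint
  calc t ^ t * exp (-t) = ∫ x in Ioi t, t ^ t * exp (-x) := by
        rw [integral_const_mul, integral_exp_neg_Ioi]
    _ ≤ ∫ x in Ioi t, exp (-x) * x ^ t :=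
        setIntegral_mono_on ((integrableOn_exp_neg_Ioi t).const_mul _)
          (hint.mono_set (Ioi_subset_Ioi ht)) measurableSet_Ioi fun x (hx : t < x) => by
            rw [mul_comm]; gcongr
    _ ≤ ∫ x in Ioi 0, exp (-x) * x ^ t :=
        setIntegral_mono_set hint
          (ae_restrict_of_forall_mem measurableSet_Ioi fun x (hx : 0 < x) => by positivity)
          (Ioi_subset_Ioi ht).eventuallyLE
    _ = Gamma (1 + t) := by rw [Gamma_eq_integral hpos, add_sub_cancel_left]

theorem prod_rpow_le_prod_rpow_self {ι : Type*} (s : Finset ι) {w p : ι → ℝ}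
    (hw : ∀ i ∈ s, 0 ≤ w i) (hw1 : ∑ i ∈ s, w i = 1)
    (hp : ∀ i ∈ s, 0 ≤ p i) (hp1 : ∑ i ∈ s, p i ≤ 1) :
    ∏ i ∈ s, p i ^ w i ≤ ∏ i ∈ s, w i ^ w i := by
  -- Where `w i = 0` the junk value `p i / 0 = 0` is harmless, since then `0 ^ w i = 1`.
  have hsplit : ∀ i ∈ s, p i ^ w i = (p i / w i) ^ w i * w i ^ w i := by
    intro i hi
    rcases (hw i hi).eq_or_lt with h | h
    · simp [← h]
    · rw [← mul_rpow (div_nonneg (hp i hi) h.le) h.le, div_mul_cancel₀ _ h.ne']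
  have hmean : ∑ i ∈ s, w i * (p i / w i) ≤ 1 := by
    refine le_trans (Finset.sum_le_sum fun i hi => ?_) hp1
    rcases (hw i hi).eq_or_lt with h | h
    · simpa [← h] using hp i hi
    · rw [mul_div_cancel₀ _ h.ne']
  calc ∏ i ∈ s, p i ^ w i = (∏ i ∈ s, (p i / w i) ^ w i) * ∏ i ∈ s, w i ^ w i := by
        rw [← Finset.prod_mul_distrib]
        exact Finset.prod_congr rfl hsplit
    _ ≤ 1 * ∏ i ∈ s, w i ^ w i := by
        gcongr
        · exact Finset.prod_nonneg fun i hi => rpow_nonneg (hw i hi) _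
        · exact (geom_mean_le_arith_mean_weighted s w _ hw hw1
            fun i hi => div_nonneg (hp i hi) (hw i hi)).trans hmean
    _ = ∏ i ∈ s, w i ^ w i := one_mul _

theorem mul_prod_rpow_le_prod_Gamma_one_add {ι : Type*} (s : Finset ι) {c : ℝ} (hc : 0 ≤ c)
    {w p : ι → ℝ} (hw : ∀ i ∈ s, 0 ≤ w i) (hw1 : ∑ i ∈ s, w i = 1)
    (hp : ∀ i ∈ s, 0 ≤ p i) (hp1 : ∑ i ∈ s, p i ≤ 1) :
    c ^ c * exp (-c) * ∏ i ∈ s, p i ^ (c * w i) ≤ ∏ i ∈ s, Gamma (1 + c * w i) := by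
  have hprod_pow : ∀ q : ι → ℝ, (∀ i ∈ s, 0 ≤ q i) →
      ∏ i ∈ s, q i ^ (c * w i) = (∏ i ∈ s, q i ^ w i) ^ c := fun q hq => by
    rw [← finsetProd_rpow _ _ fun i hi => rpow_nonneg (hq i hi) _]
    exact Finset.prod_congr rfl fun i hi => by rw [mul_comm, rpow_mul (hq i hi)]
  have hsum : ∑ i ∈ s, c * w i = c := by rw [← Finset.mul_sum, hw1, mul_one]
  have hpow_c : c ^ c = ∏ i ∈ s, c ^ (c * w i) := by
    rw [← rpow_sum_of_nonneg hc fun i hi => mul_nonneg hc (hw i hi), hsum]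
  have hexp_c : exp (-c) = ∏ i ∈ s, exp (-(c * w i)) := by
    rw [← exp_sum, Finset.sum_neg_distrib, hsum]
  have hgibbs : ∏ i ∈ s, p i ^ (c * w i) ≤ ∏ i ∈ s, w i ^ (c * w i) := by
    rw [hprod_pow p hp, hprod_pow w hw]
    exact rpow_le_rpow (Finset.prod_nonneg fun i hi => rpow_nonneg (hp i hi) _)
      (prod_rpow_le_prod_rpow_self s hw hw1 hp hp1) hc
  calc c ^ c * exp (-c) * ∏ i ∈ s, p i ^ (c * w i)
      ≤ c ^ c * exp (-c) * ∏ i ∈ s, w i ^ (c * w i) := by gcongr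
    _ = ∏ i ∈ s, (c * w i) ^ (c * w i) * exp (-(c * w i)) := by
        rw [hpow_c, hexp_c, ← Finset.prod_mul_distrib, ← Finset.prod_mul_distrib]
        exact Finset.prod_congr rfl fun i hi => by rw [mul_rpow hc (hw i hi)]; ring
    _ ≤ ∏ i ∈ s, Gamma (1 + c * w i) :=
        Finset.prod_le_prod
          (fun i hi => mul_nonneg (rpow_nonneg (mul_nonneg hc (hw i hi)) _) (exp_pos _).le)
          fun i hi => rpow_mul_exp_neg_le_Gamma_one_add (mul_nonneg hc (hw i hi))

theorem prod_rpow_div_prod_Gamma_one_add_le {ι : Type*} (s : Finset ι) {c : ℝ} (hc : 0 ≤ c)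
    {w p : ι → ℝ} (hw : ∀ i ∈ s, 0 ≤ w i) (hw1 : ∑ i ∈ s, w i = 1)
    (hp : ∀ i ∈ s, 0 ≤ p i) (hp1 : ∑ i ∈ s, p i ≤ 1) :
    (∏ i ∈ s, p i ^ (c * w i)) / ∏ i ∈ s, Gamma (1 + c * w i) ≤ exp c * c ^ (-c) := by
  have hP : 0 < ∏ i ∈ s, Gamma (1 + c * w i) :=
    Finset.prod_pos fun i hi => Gamma_pos_of_pos (by nlinarith [hw i hi])
  have hcc : 0 < c ^ c := by
    rcases hc.eq_or_lt with rfl | hc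
    · simp
    · positivity
  rw [div_le_iff₀ hP]
  calc ∏ i ∈ s, p i ^ (c * w i)
      = exp c * c ^ (-c) * (c ^ c * exp (-c) * ∏ i ∈ s, p i ^ (c * w i)) := by
        rw [rpow_neg hc, exp_neg]
        field_simp
    _ ≤ exp c * c ^ (-c) * ∏ i ∈ s, Gamma (1 + c * w i) := by
        gcongr
        exact mul_prod_rpow_le_prod_Gamma_one_add s hc hw hw1 hp hp1

end Real

/-- **Uniform bound on the Dirichlet density.**  For `S ≥ 1`, `c > 0` and a probability
vector `ω̂`, the `Dir_S(1 + c ω̂)` density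
`π(ω) = [Γ(c + S)/Π_s Γ(1 + c ω̂_s)] Π_s ω_s^{c ω̂_s}` satisfies
`π(ω) ≤ (c + S)^{c + S + 1/2} c^{-c}` for every `ω ∈ Δ(S)`. -/
theorem dirichlet_density_uniform_bound
    (S : ℕ) (hS : 1 ≤ S) (c : ℝ) (hc : 0 < c)
    (ωhat : Fin S → ℝ) (hωhat : ωhat ∈ simplexSet S) :
    ∀ ω ∈ simplexSet S,
      Real.Gamma (c + S) / (∏ s, Real.Gamma (1 + c * ωhat s)) * ∏ s, ω s ^ (c * ωhat s) ≤
        (c + S) ^ (c + S + 1 / 2) * c ^ (-c) := by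
  rintro ω ⟨hω, hω1⟩
  obtain ⟨hωhat, hωhat1⟩ := hωhat
  have hS1 : (1 : ℝ) ≤ S := by exact_mod_cast hS
  have hx : 1 ≤ c + S := by linarith
  have hratio := Real.prod_rpow_div_prod_Gamma_one_add_le Finset.univ hc.le
    (fun s _ => hωhat s) hωhat1 (fun s _ => hω s) hω1.le
  calc Real.Gamma (c + S) / (∏ s, Real.Gamma (1 + c * ωhat s)) * ∏ s, ω s ^ (c * ωhat s)
      = Real.Gamma (c + S) * ((∏ s, ω s ^ (c * ωhat s)) / ∏ s, Real.Gamma (1 + c * ωhat s)) := by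
        ring
    _ ≤ (c + S) ^ (c + S) * Real.exp (1 - (c + S)) * (Real.exp c * c ^ (-c)) := by
        refine (mul_le_mul_of_nonneg_left hratio (Real.Gamma_pos_of_pos ?_).le).trans ?_
        · linarith
        · exact mul_le_mul_of_nonneg_right (Real.Gamma_le_rpow_mul_exp hx) (by positivity)
    _ = (c + S) ^ (c + S) * Real.exp (1 - S) * c ^ (-c) := by
        rw [mul_assoc, ← mul_assoc (Real.exp _), ← Real.exp_add]
        ring_nf
    _ ≤ (c + S) ^ (c + S) * (c + S) ^ (1 / 2 : ℝ) * c ^ (-c) := by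
        gcongr
        calc Real.exp (1 - S) ≤ 1 := Real.exp_le_one_iff.mpr (by linarith)
          _ ≤ (c + S) ^ (1 / 2 : ℝ) := Real.one_le_rpow hx (by norm_num)
    _ = (c + S) ^ (c + S + 1 / 2) * c ^ (-c) := by
        rw [← Real.rpow_add (by linarith)]
end

section
/- Let ε_n = (log n)^{1/3} n^{-1/3}, S_n of order n ε_n^2 (log n)^{-1}, c_n = b n ε_n^{-2} for some b > 0, and suppose δ_n log(T_n/t_n) ≤ A log n for some A > 0 with 0 < t_n < T_n. Then there exists a constant K > 0 such that (c_n + S_n)^{c_n + S_n + 1/2} c_n^{-c_n} (T_n/t_n)^{δ_n S_n} ≤ e^{K n ε_n^2} for all sufficiently large n. -/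
open Real

theorem mul_log_add_sub_log_le {c s : ℝ} (hc : 0 < c) (hs : 0 ≤ s) :
    c * (log (c + s) - log c) ≤ s := by
  rw [← log_div (by positivity) hc.ne']
  calc c * log ((c + s) / c) ≤ c * ((c + s) / c - 1) :=
        mul_le_mul_of_nonneg_left (log_le_sub_one_of_pos (by positivity)) hc.le
    _ = s := by field_simp; ring

theorem add_rpow_mul_rpow_neg_mul_rpow_le {c s : ℝ} (hc : 0 < c) (hs : 0 ≤ s) (x y : ℝ) :
    (c + s) ^ (c + s + 1 / 2) * c ^ (-c) * x ^ y ≤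
      exp (s + (s + 1 / 2) * log (c + s) + log x * y) := by
  have hcs : 0 < c + s := by positivity
  have hexp : s + (s + 1 / 2) * log (c + s) + log x * y =
      (log (c + s) * (c + s + 1 / 2) + log c * (-c) + log x * y) +
        (s - c * (log (c + s) - log c)) := by ring
  rw [rpow_def_of_pos hcs, rpow_def_of_pos hc, ← exp_add, hexp, exp_add _ (s - _),
    exp_add _ (log x * y)]
  have hgap : 1 ≤ exp (s - c * (log (c + s) - log c)) :=
    one_le_exp (sub_nonneg.2 (mul_log_add_sub_log_le hc hs))
  calc exp (log (c + s) * (c + s + 1 / 2) + log c * (-c)) * x ^ y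
      ≤ exp (log (c + s) * (c + s + 1 / 2) + log c * (-c)) * exp (log x * y) := by
        -- no sign condition on `x`: for `x < 0` the real power only adds a cosine factor
        gcongr; exact (le_abs_self _).trans (abs_rpow_le_exp_log_mul x y)
    _ ≤ _ := le_mul_of_one_le_right (by positivity) hgap

theorem le_rpow_mul_rpow_of_le {a b p q : ℝ} (ha : 0 ≤ a) (hab : a ≤ b) (hp : 0 ≤ p)
    (hpq : p + q = 1) : a ≤ b ^ p * a ^ q := by
  calc a = a ^ p * a ^ q := by rw [← rpow_add' ha (by rw [hpq]; exact one_ne_zero), hpq, rpow_one]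
    _ ≤ b ^ p * a ^ q := by gcongr

theorem rpow_mul_rpow_le_of_le {a b p q : ℝ} (ha : 0 ≤ a) (hab : a ≤ b) (hq : 0 ≤ q)
    (hpq : p + q = 1) : b ^ p * a ^ q ≤ b := by
  calc b ^ p * a ^ q ≤ b ^ p * b ^ q :=
        mul_le_mul_of_nonneg_left (rpow_le_rpow ha hab hq) (rpow_nonneg (ha.trans hab) p)
    _ = b := by rw [← rpow_add' (ha.trans hab) (by rw [hpq]; exact one_ne_zero), hpq, rpow_one]

theorem log_add_le_three_mul_log {x y a b m : ℝ} (hx : 0 < x) (hy : 0 ≤ y)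
    (hm : 1 ≤ m) (hbm : b + a ≤ m) (hxm : x ≤ b * m * m) (hym : y ≤ a * m) :
    log (x + y) ≤ 3 * log m := by
  have hxy : x + y ≤ m ^ 3 :=
    calc x + y ≤ b * m * m + a * m * m := by nlinarith
      _ = (b + a) * m ^ 2 := by ring
      _ ≤ m * m ^ 2 := by gcongr
      _ = m ^ 3 := by ring
  simpa [log_pow] using log_le_log (by positivity) hxy

section Rate

variable {n : ℕ}

theorem one_le_log_natCast (hn : 3 ≤ n) : 1 ≤ log n := by
  rw [le_log_iff_exp_le (by positivity)]
  have : (3 : ℝ) ≤ n := by exact_mod_cast hn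
  linarith [exp_one_lt_d9]

theorem natCast_mul_epsn_sq (hn : 0 < n) :
    n * epsn n ^ 2 = (n : ℝ) ^ ((1 : ℝ) / 3) * log n ^ ((2 : ℝ) / 3) := by
  have hnR : (0 : ℝ) < n := by exact_mod_cast hn
  rw [epsn, mul_pow, ← rpow_mul_natCast (log_natCast_nonneg n), ← rpow_mul_natCast hnR.le,
    mul_left_comm, ← rpow_one_add' hnR.le (by norm_num)]
  norm_num [mul_comm]

theorem epsn_pos (hn : 2 ≤ n) : 0 < epsn n := by
  have hnR : (1 : ℝ) < n := by exact_mod_cast hn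
  exact mul_pos (rpow_pos_of_pos (log_pos hnR) _) (rpow_pos_of_pos (by linarith) _)

theorem log_le_natCast_mul_epsn_sq (hn : 0 < n) : log n ≤ n * epsn n ^ 2 := by
  rw [natCast_mul_epsn_sq hn]
  exact le_rpow_mul_rpow_of_le (log_natCast_nonneg n) (log_le_self n.cast_nonneg) (by norm_num)
    (by norm_num)

theorem natCast_mul_epsn_sq_le (hn : 0 < n) : n * epsn n ^ 2 ≤ n := by
  rw [natCast_mul_epsn_sq hn]
  exact rpow_mul_rpow_le_of_le (log_natCast_nonneg n) (log_le_self n.cast_nonneg) (by norm_num)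
    (by norm_num)

theorem inv_epsn_sq_le (hn : 3 ≤ n) : (epsn n ^ 2)⁻¹ ≤ n := by
  have hE : 1 ≤ n * epsn n ^ 2 :=
    (one_le_log_natCast hn).trans (log_le_natCast_mul_epsn_sq (by omega))
  have hnR : (0 : ℝ) < n := by exact_mod_cast (show 0 < n by omega)
  calc (epsn n ^ 2)⁻¹ = n / (n * epsn n ^ 2) := by field_simp
    _ ≤ n := div_le_self hnR.le hE

end Rate

theorem global_prior_bound_exponential_general
    (S : ℕ → ℕ) (c δ t T : ℕ → ℝ)
    (a₁ a₂ : ℝ) (ha₂ : 0 < a₂)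
    (hS : ∀ n : ℕ, 2 ≤ n →
      a₁ * (n * epsn n ^ (2 : ℕ) / Real.log n) ≤ (S n : ℝ) ∧
      (S n : ℝ) ≤ a₂ * (n * epsn n ^ (2 : ℕ) / Real.log n))
    (b : ℝ) (hb : 0 < b) (hc : ∀ n : ℕ, 2 ≤ n → c n = b * n * ((epsn n) ^ (2 : ℕ))⁻¹)
    (A : ℝ) (hA : 0 < A)
    (hδlog : ∀ n : ℕ, 2 ≤ n → δ n * Real.log (T n / t n) ≤ A * Real.log n) :
    ∃ K : ℝ, 0 < K ∧ ∃ N : ℕ, ∀ n : ℕ, N ≤ n →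
      (c n + S n) ^ (c n + S n + 1 / 2) * c n ^ (-c n) * (T n / t n) ^ (δ n * S n) ≤
        Real.exp (K * (n * epsn n ^ (2 : ℕ))) := by
  refine ⟨a₂ * (4 + A) + 2, by positivity, ⌈b + a₂⌉₊ + 3, fun n hn => ?_⟩
  have hn3 : 3 ≤ n := by omega
  have hn1 : (1 : ℝ) ≤ n := by exact_mod_cast (show 1 ≤ n by omega)
  have hbn : b + a₂ ≤ n := (Nat.le_ceil _).trans (by exact_mod_cast (show ⌈b + a₂⌉₊ ≤ n by omega))
  set E := (n : ℝ) * epsn n ^ 2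
  set L := log n
  have hL : 1 ≤ L := one_le_log_natCast hn3
  have hLE : L ≤ E := log_le_natCast_mul_epsn_sq (by omega)
  have hSL : S n * L ≤ a₂ * E := by
    have := (hS n (by omega)).2
    rwa [← mul_div_assoc, le_div_iff₀ (zero_lt_one.trans_le hL)] at this
  have hS_le : (S n : ℝ) ≤ a₂ * n := calc
    (S n : ℝ) ≤ S n * L := le_mul_of_one_le_right (S n).cast_nonneg hL
    _ ≤ a₂ * E := hSL
    _ ≤ a₂ * n := by gcongr; exact natCast_mul_epsn_sq_le (by omega)
  have hε := epsn_pos (n := n) (by omega)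
  have hc_pos : 0 < c n := by rw [hc n (by omega)]; positivity
  have hc_le : c n ≤ b * n * n := by
    rw [hc n (by omega)]; exact mul_le_mul_of_nonneg_left (inv_epsn_sq_le hn3) (by positivity)
  have hlog_cS : log (c n + S n) ≤ 3 * L :=
    log_add_le_three_mul_log hc_pos (S n).cast_nonneg hn1 hbn hc_le hS_le
  have hδS : log (T n / t n) * (δ n * S n) ≤ A * (S n * L) := by
    nlinarith [mul_le_mul_of_nonneg_left (hδlog n (by omega)) (S n).cast_nonneg]
  refine (add_rpow_mul_rpow_neg_mul_rpow_le hc_pos (S n).cast_nonneg _ _).trans (exp_le_exp.2 ?_)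
  nlinarith [mul_le_mul_of_nonneg_left hlog_cS (by positivity : (0 : ℝ) ≤ S n + 1 / 2),
    mul_le_mul_of_nonneg_left hSL hA.le]

/-- **Global prior bound is exponentially small.**  With `ε_n = (log n)^{1/3} n^{-1/3}`,
`S_n` of order `n ε_n² (log n)⁻¹`, `c_n = b n ε_n⁻²` and `δ_n log(T_n/t_n) ≤ A log n`,
there is `K > 0` with
`(c_n + S_n)^{c_n+S_n+1/2} c_n^{-c_n} (T_n/t_n)^{δ_n S_n} ≤ e^{K n ε_n²}` for large `n`. -/
theorem global_prior_bound_exponential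
    (S : ℕ → ℕ) (c δ t T : ℕ → ℝ)
    (a₁ a₂ : ℝ) (ha₁ : 0 < a₁) (ha₂ : 0 < a₂)
    (hS : ∀ n : ℕ, 2 ≤ n →
      a₁ * (n * epsn n ^ (2 : ℕ) / Real.log n) ≤ (S n : ℝ) ∧
      (S n : ℝ) ≤ a₂ * (n * epsn n ^ (2 : ℕ) / Real.log n))
    (b : ℝ) (hb : 0 < b) (hc : ∀ n : ℕ, 2 ≤ n → c n = b * n * ((epsn n) ^ (2 : ℕ))⁻¹)
    (A : ℝ) (hA : 0 < A)
    (hδlog : ∀ n : ℕ, 2 ≤ n → δ n * Real.log (T n / t n) ≤ A * Real.log n)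
    (hδ_pos : ∀ n, 0 < δ n) (ht_pos : ∀ n, 0 < t n) (htT : ∀ n, t n < T n) :
    ∃ K : ℝ, 0 < K ∧ ∃ N : ℕ, ∀ n : ℕ, N ≤ n →
      (c n + S n) ^ (c n + S n + 1 / 2) * c n ^ (-c n) * (T n / t n) ^ (δ n * S n) ≤
        Real.exp (K * (n * epsn n ^ (2 : ℕ))) :=
  global_prior_bound_exponential_general S c δ t T a₁ a₂ ha₂ hS b hb hc A hA hδlog
end
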